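/- Let P = F h^{-1} F* with F holomorphic and h = F*F invertible, and let G = F A h^{-1} F* for some smooth A : Ω → L(K). Then ∂̄G − (∂̄P)·G − G·(∂̄P) = F·(∂̄A)·h^{-1}·F*. In particular, if G = F(−K_{P,z^i z̄^j})h^{-1}F* then ∂̄G − (∂̄P)G − G(∂̄P) = F(−K_{P,z^i z̄^{j+1}})h^{-1}F*. -/

import Mathlib

open Complex ContinuousLinearMap
open scoped ContDiff

/-- Wirtinger derivative ∂ = ∂/∂λ. -/
noncomputable def pd {E : Type*} [NormedAddCommGroup E] [NormedSpace ℂ E]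
    (f : ℂ → E) : ℂ → E :=
  fun z => (2⁻¹ : ℂ) • (fderiv ℝ f z 1 - Complex.I • fderiv ℝ f z Complex.I)

/-- Wirtinger derivative ∂̄ = ∂/∂λ̄. -/
noncomputable def pdbar {E : Type*} [NormedAddCommGroup E] [NormedSpace ℂ E]
    (f : ℂ → E) : ℂ → E :=
  fun z => (2⁻¹ : ℂ) • (fderiv ℝ f z 1 + Complex.I • fderiv ℝ f z Complex.I)

/-- Covariant derivative in the holomorphic direction: A ↦ ∂A + [θ, A]. -/
noncomputable def covz {E : Type*} [NormedRing E] [NormedAlgebra ℂ E]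
    (θ : ℂ → E) (X : ℂ → E) : ℂ → E :=
  fun z => pd X z + (θ z * X z - X z * θ z)

/-- Covariant partial derivatives of curvature K_{P, z^i z̄^j}. -/
noncomputable def Kij {E : Type*} [NormedRing E] [NormedAlgebra ℂ E]
    (θ KP : ℂ → E) (i j : ℕ) : ℂ → E :=
  pdbar^[j] ((covz θ)^[i] KP)

section helpers

section comp
variable {A B C : Type*} [NormedAddCommGroup A] [NormedSpace ℂ A]
  [NormedAddCommGroup B] [NormedSpace ℂ B] [NormedAddCommGroup C] [NormedSpace ℂ C]

lemma isBBM_comp : IsBoundedBilinearMap ℝ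
    (fun p : (B →L[ℂ] C) × (A →L[ℂ] B) => p.1.comp p.2) where
  add_left f f' g := ContinuousLinearMap.add_comp f f' g
  smul_left r f g := by ext x; simp
  add_right f g g' := ContinuousLinearMap.comp_add f g g'
  smul_right r f g := by ext x; simp
  bound := ⟨1, one_pos, fun f g => by simpa using ContinuousLinearMap.opNorm_comp_le f g⟩

lemma hasFDerivAt_clm_comp' {f : ℂ → B →L[ℂ] C} {g : ℂ → A →L[ℂ] B} {z : ℂ}
    (hf : DifferentiableAt ℝ f z) (hg : DifferentiableAt ℝ g z) :
    HasFDerivAt (fun w => (f w).comp (g w))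
      (((isBBM_comp (A := A) (B := B) (C := C)).deriv (f z, g z)).comp
        ((fderiv ℝ f z).prod (fderiv ℝ g z))) z := by
  exact ((isBBM_comp).hasFDerivAt (f z, g z)).comp z (hf.hasFDerivAt.prodMk hg.hasFDerivAt)

lemma fderiv_clm_comp' {f : ℂ → B →L[ℂ] C} {g : ℂ → A →L[ℂ] B} {z : ℂ}
    (hf : DifferentiableAt ℝ f z) (hg : DifferentiableAt ℝ g z) (v : ℂ) :
    fderiv ℝ (fun w => (f w).comp (g w)) z v
      = (fderiv ℝ f z v).comp (g z) + (f z).comp (fderiv ℝ g z v) := by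
  rw [(hasFDerivAt_clm_comp' hf hg).fderiv]
  simp [IsBoundedBilinearMap.deriv_apply]
  rw [add_comm]

lemma pdbar_clm_comp {f : ℂ → B →L[ℂ] C} {g : ℂ → A →L[ℂ] B} {z : ℂ}
    (hf : DifferentiableAt ℝ f z) (hg : DifferentiableAt ℝ g z) :
    pdbar (fun w => (f w).comp (g w)) z
      = (pdbar f z).comp (g z) + (f z).comp (pdbar g z) := by
  simp only [pdbar, fderiv_clm_comp' hf hg]
  simp only [ContinuousLinearMap.add_comp, ContinuousLinearMap.comp_add,
    ContinuousLinearMap.smul_comp, ContinuousLinearMap.comp_smul, smul_add]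
  module

lemma contDiffOn_clm_comp' {n : WithTop ℕ∞} {f : ℂ → B →L[ℂ] C} {g : ℂ → A →L[ℂ] B}
    {s : Set ℂ} (hf : ContDiffOn ℝ n f s) (hg : ContDiffOn ℝ n g s) :
    ContDiffOn ℝ n (fun w => (f w).comp (g w)) s :=
  (isBBM_comp (A := A) (B := B) (C := C)).contDiff.comp_contDiffOn (hf.prodMk hg)

end comp

section basic
variable {E : Type*} [NormedAddCommGroup E] [NormedSpace ℂ E]

lemma pdbar_congr {f g : ℂ → E} {z : ℂ} (h : f =ᶠ[nhds z] g) : pdbar f z = pdbar g z := by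
  rw [pdbar, pdbar, h.fderiv_eq]

lemma pd_congr {f g : ℂ → E} {z : ℂ} (h : f =ᶠ[nhds z] g) : pd f z = pd g z := by
  rw [pd, pd, h.fderiv_eq]

lemma pdbar_holo {f : ℂ → E} {z : ℂ} (hf : DifferentiableAt ℂ f z) : pdbar f z = 0 := by
  have h1 : fderiv ℝ f z = (fderiv ℂ f z).restrictScalars ℝ :=
    (hf.hasFDerivAt.restrictScalars ℝ).fderiv
  have h2 : fderiv ℂ f z Complex.I = Complex.I • fderiv ℂ f z 1 := by
    rw [← map_smul, smul_eq_mul, mul_one]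
  rw [pdbar, h1]
  simp only [ContinuousLinearMap.coe_restrictScalars', ContinuousLinearMap.coe_coe]
  rw [h2, smul_smul, Complex.I_mul_I]
  simp

lemma pdbar_neg (f : ℂ → E) (z : ℂ) : pdbar (fun w => -(f w)) z = -(pdbar f z) := by
  rw [pdbar, pdbar, fderiv_fun_neg]
  simp only [ContinuousLinearMap.neg_apply]
  module

lemma contDiffOn_pd {f : ℂ → E} {s : Set ℂ} (hs : IsOpen s)
    (hf : ContDiffOn ℝ ∞ f s) : ContDiffOn ℝ ∞ (pd f) s := by
  have h1 : ContDiffOn ℝ ∞ (fderiv ℝ f) s := hf.fderiv_of_isOpen hs (by simp)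
  have h2 : ContDiffOn ℝ ∞ (fun z => fderiv ℝ f z 1) s := h1.clm_apply contDiffOn_const
  have h3 : ContDiffOn ℝ ∞ (fun z => fderiv ℝ f z Complex.I) s := h1.clm_apply contDiffOn_const
  exact ((h2.sub (h3.const_smul Complex.I)).const_smul (2⁻¹:ℂ)).congr (fun z hz => rfl)

lemma contDiffOn_pdbar {f : ℂ → E} {s : Set ℂ} (hs : IsOpen s)
    (hf : ContDiffOn ℝ ∞ f s) : ContDiffOn ℝ ∞ (pdbar f) s := by
  have h1 : ContDiffOn ℝ ∞ (fderiv ℝ f) s := hf.fderiv_of_isOpen hs (by simp)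
  have h2 : ContDiffOn ℝ ∞ (fun z => fderiv ℝ f z 1) s := h1.clm_apply contDiffOn_const
  have h3 : ContDiffOn ℝ ∞ (fun z => fderiv ℝ f z Complex.I) s := h1.clm_apply contDiffOn_const
  exact ((h2.add (h3.const_smul Complex.I)).const_smul (2⁻¹:ℂ)).congr (fun z hz => rfl)

end basic

section inverse
variable {R : Type*} [NormedRing R] [NormedAlgebra ℂ R] [CompleteSpace R]

lemma hasFDerivAt_inv_comp {h : ℂ → R} {z : ℂ} (hd : DifferentiableAt ℝ h z)
    (hu : IsUnit (h z)) :
    HasFDerivAt (fun w => Ring.inverse (h w))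
      ((-((ContinuousLinearMap.mulLeftRight ℂ R) (Ring.inverse (h z))
        (Ring.inverse (h z))).restrictScalars ℝ).comp (fderiv ℝ h z)) z := by
  obtain ⟨u, hu⟩ := hu
  have h1 : HasFDerivAt Ring.inverse
      (-((ContinuousLinearMap.mulLeftRight ℂ R) ↑u⁻¹ ↑u⁻¹)) (h z) := by
    rw [← hu]; exact hasFDerivAt_ringInverse u
  have h2 := (h1.restrictScalars ℝ).comp z hd.hasFDerivAt
  have h3 : Ring.inverse (h z) = (↑u⁻¹ : R) := by rw [← hu, Ring.inverse_unit]
  rw [h3]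
  rw [← ContinuousLinearMap.restrictScalars_neg]; exact h2

lemma pdbar_ring_inverse {h : ℂ → R} {z : ℂ} (hd : DifferentiableAt ℝ h z)
    (hu : IsUnit (h z)) :
    pdbar (fun w => Ring.inverse (h w)) z
      = -(Ring.inverse (h z) * pdbar h z * Ring.inverse (h z)) := by
  rw [pdbar, (hasFDerivAt_inv_comp hd hu).fderiv]
  simp only [ContinuousLinearMap.comp_apply, ContinuousLinearMap.coe_restrictScalars',
    ContinuousLinearMap.neg_apply, ContinuousLinearMap.coe_coe,
    ContinuousLinearMap.mulLeftRight_apply, pdbar]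
  simp only [mul_smul_comm, smul_mul_assoc, mul_add, add_mul, smul_add]
  module
end inverse

section adjointsec
variable {H K : Type*} [NormedAddCommGroup H] [InnerProductSpace ℂ H] [CompleteSpace H]
  [NormedAddCommGroup K] [InnerProductSpace ℂ K] [CompleteSpace K]

noncomputable def adjR : (K →L[ℂ] H) →L[ℝ] (H →L[ℂ] K) :=
  LinearMap.mkContinuous
    { toFun := fun T => ContinuousLinearMap.adjoint T
      map_add' := fun a b => by simp [map_add]
      map_smul' := fun r T => by
        show ContinuousLinearMap.adjoint ((r : ℝ) • T) = r • ContinuousLinearMap.adjoint T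
        have : (r : ℝ) • T = (r : ℂ) • T := by simp
        rw [this, LinearIsometryEquiv.map_smulₛₗ]
        simp }
    1 (fun T => by simp [LinearIsometryEquiv.norm_map])

@[simp] lemma adjR_apply (T : K →L[ℂ] H) : adjR T = ContinuousLinearMap.adjoint T := rfl

lemma hasFDerivAt_adj {F : ℂ → K →L[ℂ] H} {z : ℂ} (hf : DifferentiableAt ℝ F z) :
    HasFDerivAt (fun w => ContinuousLinearMap.adjoint (F w))
      ((adjR).comp (fderiv ℝ F z)) z := by
  exact (adjR.hasFDerivAt).comp z hf.hasFDerivAt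

lemma diff_adj {F : ℂ → K →L[ℂ] H} {z : ℂ} (hf : DifferentiableAt ℝ F z) :
    DifferentiableAt ℝ (fun w => ContinuousLinearMap.adjoint (F w)) z :=
  (hasFDerivAt_adj hf).differentiableAt

lemma pdbar_adj {F : ℂ → K →L[ℂ] H} {z : ℂ} (hf : DifferentiableAt ℝ F z) :
    pdbar (fun w => ContinuousLinearMap.adjoint (F w)) z
      = ContinuousLinearMap.adjoint (pd F z) := by
  rw [pdbar, (hasFDerivAt_adj hf).fderiv]
  simp only [ContinuousLinearMap.comp_apply, adjR_apply, pd]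
  have h1 : ContinuousLinearMap.adjoint
        ((2⁻¹:ℂ) • (fderiv ℝ F z 1 - Complex.I • fderiv ℝ F z Complex.I))
      = (2⁻¹:ℂ) • (ContinuousLinearMap.adjoint (fderiv ℝ F z 1)
          + Complex.I • ContinuousLinearMap.adjoint (fderiv ℝ F z Complex.I)) := by
    rw [LinearIsometryEquiv.map_smulₛₗ, map_sub, LinearIsometryEquiv.map_smulₛₗ]
    simp [Complex.conj_I, sub_neg_eq_add, map_ofNat]
  rw [h1]

lemma contDiff_adj : ContDiff ℝ ∞ (fun T : K →L[ℂ] H => ContinuousLinearMap.adjoint T) :=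
  by have h := (adjR (H := H) (K := K)).contDiff (n := ∞); convert h using 1; funext T; simp

end adjointsec
end helpers

section core
variable {H K : Type*} [NormedAddCommGroup H] [InnerProductSpace ℂ H] [CompleteSpace H]
  [NormedAddCommGroup K] [InnerProductSpace ℂ K] [CompleteSpace K]

set_option maxHeartbeats 1000000 in
lemma core_identity
    (Ω : Set ℂ) (hΩ : IsOpen Ω)
    (F : ℂ → K →L[ℂ] H) (hF : DifferentiableOn ℂ F Ω)
    (h : ℂ → K →L[ℂ] K)
    (hdef : ∀ z ∈ Ω, h z = ContinuousLinearMap.adjoint (F z) ∘L F z)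
    (hinv : ∀ z ∈ Ω, IsUnit (h z))
    (hi : ℂ → K →L[ℂ] K) (hhi : ∀ z ∈ Ω, hi z = Ring.inverse (h z))
    (P : ℂ → H →L[ℂ] H)
    (hP : ∀ z ∈ Ω, P z = F z ∘L hi z ∘L ContinuousLinearMap.adjoint (F z))
    (A : ℂ → K →L[ℂ] K) (hA : ∀ z ∈ Ω, DifferentiableAt ℝ A z)
    (G : ℂ → H →L[ℂ] H)
    (hG : ∀ z, G z = F z ∘L (A z * hi z) ∘L ContinuousLinearMap.adjoint (F z))
    (z : ℂ) (hz : z ∈ Ω) :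
    pdbar G z - pdbar P z * G z - G z * pdbar P z =
      F z ∘L (pdbar A z * hi z) ∘L ContinuousLinearMap.adjoint (F z) := by
  have hmem : Ω ∈ nhds z := hΩ.mem_nhds hz
  have dFC : DifferentiableAt ℂ F z := hF.differentiableAt hmem
  have dF : DifferentiableAt ℝ F z := dFC.restrictScalars ℝ
  have dFs : DifferentiableAt ℝ (fun w => ContinuousLinearMap.adjoint (F w)) z := diff_adj dF
  have hhev : h =ᶠ[nhds z] (fun w => (ContinuousLinearMap.adjoint (F w)).comp (F w)) :=
    Filter.eventuallyEq_of_mem hmem hdef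
  have dh : DifferentiableAt ℝ h z :=
    ((hasFDerivAt_clm_comp' dFs dF).differentiableAt).congr_of_eventuallyEq hhev
  have hiev : hi =ᶠ[nhds z] (fun w => Ring.inverse (h w)) :=
    Filter.eventuallyEq_of_mem hmem hhi
  have dhi : DifferentiableAt ℝ hi z :=
    ((hasFDerivAt_inv_comp dh (hinv z hz)).differentiableAt).congr_of_eventuallyEq hiev
  have dA' : DifferentiableAt ℝ A z := hA z hz
  -- pdbar facts
  have pF0 : pdbar F z = 0 := pdbar_holo dFC
  have pFs : pdbar (fun w => ContinuousLinearMap.adjoint (F w)) z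
      = ContinuousLinearMap.adjoint (pd F z) := pdbar_adj dF
  have ph : pdbar h z = (ContinuousLinearMap.adjoint (pd F z)).comp (F z) := by
    rw [pdbar_congr hhev, pdbar_clm_comp dFs dF, pF0, pFs, comp_zero, add_zero]
  have phi : pdbar hi z = -(hi z * pdbar h z * hi z) := by
    rw [pdbar_congr hiev, pdbar_ring_inverse dh (hinv z hz), ← hhi z hz]
  have f1 : (ContinuousLinearMap.adjoint (F z)).comp (F z) = h z := (hdef z hz).symm
  have f2a : hi z * h z = 1 := by
    rw [hhi z hz]; exact Ring.inverse_mul_cancel _ (hinv z hz)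
  have f2b : h z * hi z = 1 := by
    rw [hhi z hz]; exact Ring.mul_inverse_cancel _ (hinv z hz)
  -- P
  have hPev : P =ᶠ[nhds z]
      (fun w => (F w).comp ((hi w).comp (ContinuousLinearMap.adjoint (F w)))) :=
    Filter.eventuallyEq_of_mem hmem hP
  have dhiFs : DifferentiableAt ℝ
      (fun w => (hi w).comp (ContinuousLinearMap.adjoint (F w))) z :=
    (hasFDerivAt_clm_comp' dhi dFs).differentiableAt
  have pP : pdbar P z = (F z).comp
      ((pdbar hi z).comp (ContinuousLinearMap.adjoint (F z))
        + (hi z).comp (ContinuousLinearMap.adjoint (pd F z))) := by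
    rw [pdbar_congr hPev, pdbar_clm_comp dF dhiFs, pF0, zero_comp, zero_add,
      pdbar_clm_comp dhi dFs, pFs]
  -- G
  have hGev : G =ᶠ[nhds z]
      (fun w => (F w).comp (((A w).comp (hi w)).comp (ContinuousLinearMap.adjoint (F w)))) :=
    Filter.Eventually.of_forall (fun w => by
      rw [hG w, ContinuousLinearMap.mul_def])
  have dAhi : DifferentiableAt ℝ (fun w => (A w).comp (hi w)) z :=
    (hasFDerivAt_clm_comp' dA' dhi).differentiableAt
  have dInner : DifferentiableAt ℝ
      (fun w => ((A w).comp (hi w)).comp (ContinuousLinearMap.adjoint (F w))) z :=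
    (hasFDerivAt_clm_comp' dAhi dFs).differentiableAt
  have pG : pdbar G z = (F z).comp
      ((((pdbar A z).comp (hi z) + (A z).comp (pdbar hi z)).comp
          (ContinuousLinearMap.adjoint (F z))
        + ((A z).comp (hi z)).comp (ContinuousLinearMap.adjoint (pd F z)))) := by
    rw [pdbar_congr hGev, pdbar_clm_comp dF dInner, pF0, zero_comp, zero_add,
      pdbar_clm_comp dAhi dFs, pFs, pdbar_clm_comp dA' dhi]
  -- algebra
  have key0 : pdbar hi z * h z + hi z * pdbar h z = 0 := by
    rw [phi, neg_mul, mul_assoc (hi z * pdbar h z), f2a, mul_one, neg_add_cancel]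
  have hPa : (pdbar P z).comp (F z) = 0 := by
    rw [pP, comp_assoc, add_comp, comp_assoc, comp_assoc, f1, ← ph]
    simp only [← ContinuousLinearMap.mul_def]
    rw [key0, comp_zero]
  have hPG : pdbar P z * G z = 0 := by
    rw [ContinuousLinearMap.mul_def, hG z, ← comp_assoc, hPa, zero_comp]
  have key1 : h z * pdbar hi z = -(pdbar h z * hi z) := by
    rw [phi, mul_neg, ← mul_assoc, ← mul_assoc, f2b, one_mul]
  have hbP : (ContinuousLinearMap.adjoint (F z)).comp (pdbar P z)
      = (-(pdbar h z * hi z)).comp (ContinuousLinearMap.adjoint (F z))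
        + ContinuousLinearMap.adjoint (pd F z) := by
    rw [pP, ← comp_assoc, f1, comp_add, ← comp_assoc, ← comp_assoc]
    simp only [← ContinuousLinearMap.mul_def]
    rw [key1, f2b, ContinuousLinearMap.one_def, id_comp]
  have hGP : G z * pdbar P z = (F z).comp
      (((A z * hi z).comp (-(pdbar h z * hi z))).comp (ContinuousLinearMap.adjoint (F z))
        + (A z * hi z).comp (ContinuousLinearMap.adjoint (pd F z))) := by
    rw [ContinuousLinearMap.mul_def, hG z, comp_assoc, comp_assoc, hbP, comp_add,
      ← comp_assoc]
  -- final assembly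
  rw [pG, hPG, hGP, sub_zero]
  simp only [← ContinuousLinearMap.mul_def]
  rw [← comp_sub]
  congr 1
  rw [add_sub_add_comm, sub_self, add_zero, ← sub_comp]
  congr 1
  rw [phi]
  noncomm_ring

end core

set_option maxHeartbeats 1000000 in
theorem stmt12
    {H K : Type*} [NormedAddCommGroup H] [InnerProductSpace ℂ H] [CompleteSpace H]
    [NormedAddCommGroup K] [InnerProductSpace ℂ K] [CompleteSpace K]
    (Ω : Set ℂ) (hΩ : IsOpen Ω)
    (F : ℂ → K →L[ℂ] H)
    (hF : DifferentiableOn ℂ F Ω)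
    (h : ℂ → K →L[ℂ] K)
    (hdef : ∀ z ∈ Ω, h z = ContinuousLinearMap.adjoint (F z) ∘L F z)
    (hinv : ∀ z ∈ Ω, IsUnit (h z))
    (hi : ℂ → K →L[ℂ] K) (hhi : ∀ z ∈ Ω, hi z = Ring.inverse (h z))
    (P : ℂ → H →L[ℂ] H)
    (hP : ∀ z ∈ Ω, P z = F z ∘L hi z ∘L ContinuousLinearMap.adjoint (F z))
    (KP : ℂ → K →L[ℂ] K)
    (hKP : ∀ z ∈ Ω, KP z = -(pdbar (fun w => hi w * pd h w) z))
    (θ : ℂ → K →L[ℂ] K) (hθ : ∀ z ∈ Ω, θ z = hi z * pd h z)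
    : (∀ (A : ℂ → K →L[ℂ] K), ContDiffOn ℝ (⊤ : ℕ∞) A Ω →
        ∀ (G : ℂ → H →L[ℂ] H),
          (∀ z, G z = F z ∘L (A z * hi z) ∘L ContinuousLinearMap.adjoint (F z)) →
          ∀ z ∈ Ω,
            pdbar G z - pdbar P z * G z - G z * pdbar P z =
              F z ∘L (pdbar A z * hi z) ∘L ContinuousLinearMap.adjoint (F z)) ∧
      (∀ (i j : ℕ) (G : ℂ → H →L[ℂ] H),
        (∀ z, G z = F z ∘L ((-(Kij θ KP i j z)) * hi z) ∘L
          ContinuousLinearMap.adjoint (F z)) →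
        ∀ z ∈ Ω,
          pdbar G z - pdbar P z * G z - G z * pdbar P z =
            F z ∘L ((-(Kij θ KP i (j + 1) z)) * hi z) ∘L
              ContinuousLinearMap.adjoint (F z)) := by
  constructor
  · intro A hA G hG z hz
    exact core_identity Ω hΩ F hF h hdef hinv hi hhi P hP A
      (fun w hw => ((hA.differentiableOn (by simp)).differentiableAt
        (hΩ.mem_nhds hw))) G hG z hz
  · -- smoothness chain
    have hsmF : ContDiffOn ℝ ∞ F Ω :=
      ContDiffOn.restrict_scalars ℝ
        (((hF.analyticOnNhd hΩ).contDiffOn hΩ.uniqueDiffOn : ContDiffOn ℂ ∞ F Ω))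
    have hsmFs : ContDiffOn ℝ ∞ (fun w => ContinuousLinearMap.adjoint (F w)) Ω :=
      (contDiff_adj (H := H) (K := K)).comp_contDiffOn hsmF
    have hsmh : ContDiffOn ℝ ∞ h Ω :=
      (contDiffOn_clm_comp' hsmFs hsmF).congr hdef
    have hsmhi : ContDiffOn ℝ ∞ hi Ω := by
      intro w hw
      have hu := hinv w hw
      obtain ⟨u, hu⟩ := hu
      have hinvAt : ContDiffAt ℝ ∞ (Ring.inverse : (K →L[ℂ] K) → (K →L[ℂ] K)) (h w) := by
        rw [← hu]
        exact ContDiffAt.restrict_scalars ℝ (contDiffAt_ringInverse ℂ u)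
      have hcomp : ContDiffWithinAt ℝ ∞ (fun v => Ring.inverse (h v)) Ω w :=
        hinvAt.comp_contDiffWithinAt w (hsmh w hw)
      exact hcomp.congr (fun y hy => hhi y hy) (hhi w hw)
    have hsmθ : ContDiffOn ℝ ∞ θ Ω := by
      have := contDiffOn_clm_comp' hsmhi (contDiffOn_pd hΩ hsmh)
      exact this.congr (fun w hw => by rw [hθ w hw, ContinuousLinearMap.mul_def])
    have hsmKP : ContDiffOn ℝ ∞ KP Ω := by
      have h1 : ContDiffOn ℝ ∞ (fun w => hi w * pd h w) Ω := by
        have := contDiffOn_clm_comp' hsmhi (contDiffOn_pd hΩ hsmh)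
        exact this.congr (fun w hw => ContinuousLinearMap.mul_def _ _)
      have h2 := (contDiffOn_pdbar hΩ h1).neg
      exact h2.congr hKP
    have hcov : ∀ X : ℂ → K →L[ℂ] K, ContDiffOn ℝ ∞ X Ω →
        ContDiffOn ℝ ∞ (covz θ X) Ω := by
      intro X hX
      have h1 : ContDiffOn ℝ ∞ (fun w => θ w * X w) Ω :=
        (contDiffOn_clm_comp' hsmθ hX).congr (fun w hw => ContinuousLinearMap.mul_def _ _)
      have h2 : ContDiffOn ℝ ∞ (fun w => X w * θ w) Ω :=
        (contDiffOn_clm_comp' hX hsmθ).congr (fun w hw => ContinuousLinearMap.mul_def _ _)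
      exact ((contDiffOn_pd hΩ hX).add (h1.sub h2)).congr (fun w hw => rfl)
    have hsmKij : ∀ i j : ℕ, ContDiffOn ℝ ∞ (Kij θ KP i j) Ω := by
      have hbase : ∀ i : ℕ, ContDiffOn ℝ ∞ ((covz θ)^[i] KP) Ω := by
        intro i
        induction i with
        | zero => simpa using hsmKP
        | succ i ih =>
          rw [Function.iterate_succ_apply']
          exact hcov _ ih
      intro i j
      induction j with
      | zero => simpa [Kij] using hbase i
      | succ j ih =>
        have : Kij θ KP i (j + 1) = pdbar (Kij θ KP i j) := by
          simp only [Kij, Function.iterate_succ_apply']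
        rw [this]
        exact contDiffOn_pdbar hΩ ih
    intro i j G hG z hz
    have hA : ∀ w ∈ Ω, DifferentiableAt ℝ (fun v => -(Kij θ KP i j v)) w := by
      intro w hw
      exact (((hsmKij i j).neg.differentiableOn (by simp)).differentiableAt
        (hΩ.mem_nhds hw))
    have hmain := core_identity Ω hΩ F hF h hdef hinv hi hhi P hP
      (fun v => -(Kij θ KP i j v)) hA G hG z hz
    have hstep : pdbar (fun v => -(Kij θ KP i j v)) z = -(Kij θ KP i (j + 1) z) := by
      rw [pdbar_neg]
      congr 1
      simp only [Kij, Function.iterate_succ_apply']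
    rw [hstep] at hmain
    exact hmain
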